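/- Let U ⊆ ℝˡ be an open convex set and let C : U → Mₙ(ℝ) be continuously differentiable such that for every φ ∈ U, C(φ) is symmetric with eigenvalues bounded below by λ_min > 0 and ‖∂C/∂φⱼ(φ)‖_F ≤ M for all j = 1, …, l; moreover assume ‖C(φ) − C(φ')‖₂ ≤ L_φ ‖φ − φ'‖₂ for all φ, φ' ∈ U. Let Y ∈ ℝⁿ, let B be a real n×L matrix with ‖B‖₂ ≤ B*, let R > 0, and define the log-likelihood ℓ(β, φ) = −½ log det C(φ) − ½ (Y − Bβ)ᵀ C(φ)⁻¹ (Y − Bβ). Then for all φ, φ' ∈ U and all β, β' ∈ ℝᴸ with ‖β‖₂ ≤ R and ‖β'‖₂ ≤ R: |ℓ(β, φ) − ℓ(β', φ')| ≤ [ ½ · M √(n l) / λ_min + ½ · 𝓛(Y) ] · ‖(β, φ) − (β', φ')‖₂, where 𝓛(Y) = √2 · max{ (L_φ / λ_min²) · ( ‖Y‖₂² + 2 B* R ‖Y‖₂ + (B* R)² ), (B* / λ_min) · ( 2‖Y‖₂ + 2 B* R ) } and ‖(β, φ) − (β', φ')‖₂ = √(‖β − β'‖₂² + ‖φ − φ'‖₂²).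 -/

import Mathlib

open Matrix

/-- The Euclidean norm `‖x‖₂ = √(Σᵢ xᵢ²)` of a vector `x ∈ ℝⁿ`. -/
noncomputable def vnorm {n : ℕ} (x : Fin n → ℝ) : ℝ :=
  Real.sqrt (∑ i, (x i) ^ 2)

/-- The Frobenius norm `‖A‖_F = √(tr(Aᵀ A))` of a real `n × n` matrix. -/
noncomputable def frobNorm {n : ℕ} (A : Matrix (Fin n) (Fin n) ℝ) : ℝ :=
  Real.sqrt (Matrix.trace (Aᵀ * A))

/-- The spectral (operator ℓ²) norm of a real `m × n` matrix: the operator norm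
of the induced linear map between Euclidean spaces. -/
noncomputable def specNorm {m n : ℕ} (A : Matrix (Fin m) (Fin n) ℝ) : ℝ :=
  ‖LinearMap.toContinuousLinearMap (Matrix.toEuclideanLin A)‖

/-- The entrywise partial derivative `∂C/∂φⱼ` of a matrix-valued map
`C : ℝˡ → Mₙ(ℝ)` in the `j`-th coordinate, at the point `φ`. -/
noncomputable def partialDeriv {l n : ℕ}
    (C : (Fin l → ℝ) → Matrix (Fin n) (Fin n) ℝ) (j : Fin l) (φ : Fin l → ℝ) :
    Matrix (Fin n) (Fin n) ℝ :=
  Matrix.of fun i k => fderiv ℝ (fun ψ => C ψ i k) φ (Pi.single j 1)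

/-- The per-study Gaussian-process log-likelihood
`ℓ(β, φ) = −½ log det C(φ) − ½ (Y − Bβ)ᵀ C(φ)⁻¹ (Y − Bβ)`. -/
noncomputable def logLik {n L l : ℕ} (Y : Fin n → ℝ)
    (B : Matrix (Fin n) (Fin L) ℝ) (C : (Fin l → ℝ) → Matrix (Fin n) (Fin n) ℝ)
    (β : Fin L → ℝ) (φ : Fin l → ℝ) : ℝ :=
  -(1 / 2) * Real.log ((C φ).det) -
    (1 / 2) * ((Y - B.mulVec β) ⬝ᵥ (C φ)⁻¹.mulVec (Y - B.mulVec β))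

/-- The stochastic Lipschitz coefficient `𝓛(Y)` on the parameter ball of radius `R`:
`𝓛(Y) = √2 · max{ (L_φ/λ_min²)(‖Y‖² + 2B*R‖Y‖ + (B*R)²), (B*/λ_min)(2‖Y‖ + 2B*R) }`. -/
noncomputable def stochLipCoeff {n : ℕ} (Y : Fin n → ℝ)
    (Bstar R lmin Lphi : ℝ) : ℝ :=
  Real.sqrt 2 *
    max ((Lphi / lmin ^ 2) * (vnorm Y ^ 2 + 2 * Bstar * R * vnorm Y + (Bstar * R) ^ 2))
      ((Bstar / lmin) * (2 * vnorm Y + 2 * Bstar * R))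


/-!
Split `ℓ` into the log-determinant and the quadratic form. Along the segment from `φ'` to `φ`,
Jacobi's formula gives `(log det C)' = tr (C⁻¹ Ċ)`, and
`|tr (C⁻¹ ∂ⱼC)| ≤ ‖C⁻¹‖_F ‖∂ⱼC‖_F ≤ (√n / λ_min) M`, so the mean value theorem bounds the first part
by `M √(n l) / λ_min · ‖φ - φ'‖`. For the quadratic form, `C⁻¹ - C'⁻¹ = C⁻¹ (C' - C) C'⁻¹` with
`‖C⁻¹‖₂ ≤ 1 / λ_min`, and the residuals `Y - Bβ` have norm at most `‖Y‖ + B* R`; this gives a bound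
`a ‖φ - φ'‖ + b ‖β - β'‖ ≤ √2 max(a, b) ‖(β, φ) - (β', φ')‖`.
-/

open scoped Matrix.Norms.L2Operator

lemma abs_sum_mul_le_sqrt_mul_sqrt {ι : Type*} (s : Finset ι) (f g : ι → ℝ) :
    |∑ i ∈ s, f i * g i| ≤ √(∑ i ∈ s, f i ^ 2) * √(∑ i ∈ s, g i ^ 2) :=
  calc |∑ i ∈ s, f i * g i| ≤ ∑ i ∈ s, |f i| * |g i| := by
        simpa only [abs_mul] using Finset.abs_sum_le_sum_abs (fun i => f i * g i) s
    _ ≤ √(∑ i ∈ s, |f i| ^ 2) * √(∑ i ∈ s, |g i| ^ 2) := Real.sum_mul_le_sqrt_mul_sqrt _ _ _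
    _ = √(∑ i ∈ s, f i ^ 2) * √(∑ i ∈ s, g i ^ 2) := by simp only [sq_abs]

section EuclideanNorms

variable {m n : ℕ}

lemma vnorm_eq_norm_toLp (x : Fin n → ℝ) : vnorm x = ‖WithLp.toLp 2 x‖ := by
  simp [vnorm, EuclideanSpace.norm_eq]

lemma vnorm_nonneg (x : Fin n → ℝ) : 0 ≤ vnorm x := Real.sqrt_nonneg _

lemma sq_vnorm (x : Fin n → ℝ) : vnorm x ^ 2 = x ⬝ᵥ x := by
  rw [vnorm, Real.sq_sqrt (by positivity)]
  simp only [dotProduct, sq]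

lemma vnorm_sub_le (x y : Fin n → ℝ) : vnorm (x - y) ≤ vnorm x + vnorm y := by
  simpa only [vnorm_eq_norm_toLp, WithLp.toLp_sub] using norm_sub_le _ _

lemma vnorm_sub_comm (x y : Fin n → ℝ) : vnorm (x - y) = vnorm (y - x) := by
  simpa only [vnorm_eq_norm_toLp, WithLp.toLp_sub] using norm_sub_rev _ _

lemma vnorm_single_one (j : Fin n) : vnorm (Pi.single j 1 : Fin n → ℝ) = 1 := by
  simp [vnorm_eq_norm_toLp]

lemma abs_dotProduct_le (x y : Fin n → ℝ) : |x ⬝ᵥ y| ≤ vnorm x * vnorm y :=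
  abs_sum_mul_le_sqrt_mul_sqrt _ x y

lemma specNorm_eq_l2_opNorm (A : Matrix (Fin m) (Fin n) ℝ) : specNorm A = ‖A‖ := rfl

lemma specNorm_nonneg (A : Matrix (Fin m) (Fin n) ℝ) : 0 ≤ specNorm A := norm_nonneg _

lemma specNorm_mul_le {k : ℕ} (A : Matrix (Fin m) (Fin n) ℝ) (B : Matrix (Fin n) (Fin k) ℝ) :
    specNorm (A * B) ≤ specNorm A * specNorm B :=
  Matrix.l2_opNorm_mul A B

lemma specNorm_sub_comm (A B : Matrix (Fin m) (Fin n) ℝ) : specNorm (A - B) = specNorm (B - A) :=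
  norm_sub_rev A B

lemma vnorm_mulVec_le (A : Matrix (Fin m) (Fin n) ℝ) (x : Fin n → ℝ) :
    vnorm (A *ᵥ x) ≤ specNorm A * vnorm x := by
  simpa [vnorm_eq_norm_toLp, specNorm_eq_l2_opNorm] using A.l2_opNorm_mulVec (WithLp.toLp 2 x)

lemma specNorm_le_of_vnorm_mulVec_le (A : Matrix (Fin m) (Fin n) ℝ) {c : ℝ} (hc : 0 ≤ c)
    (h : ∀ x, vnorm (A *ᵥ x) ≤ c * vnorm x) : specNorm A ≤ c :=
  ContinuousLinearMap.opNorm_le_bound _ hc fun x => by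
    simpa [vnorm_eq_norm_toLp, Matrix.toLpLin_apply] using h x.ofLp

lemma abs_dotProduct_mulVec_le (A : Matrix (Fin n) (Fin n) ℝ) (x y : Fin n → ℝ) :
    |x ⬝ᵥ A *ᵥ y| ≤ specNorm A * vnorm x * vnorm y :=
  calc |x ⬝ᵥ A *ᵥ y| ≤ vnorm x * vnorm (A *ᵥ y) := abs_dotProduct_le _ _
    _ ≤ vnorm x * (specNorm A * vnorm y) :=
        mul_le_mul_of_nonneg_left (vnorm_mulVec_le _ _) (vnorm_nonneg _)
    _ = specNorm A * vnorm x * vnorm y := by ring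

lemma frobNorm_eq_sqrt_sum (A : Matrix (Fin n) (Fin n) ℝ) :
    frobNorm A = √(∑ i, ∑ j, A i j ^ 2) := by
  rw [frobNorm, Matrix.trace, Finset.sum_comm]
  simp only [Matrix.diag_apply, Matrix.mul_apply, Matrix.transpose_apply, sq]

lemma frobNorm_nonneg (A : Matrix (Fin n) (Fin n) ℝ) : 0 ≤ frobNorm A := Real.sqrt_nonneg _

lemma abs_trace_mul_le (A B : Matrix (Fin n) (Fin n) ℝ) :
    |(A * B).trace| ≤ frobNorm A * frobNorm B := by
  have h := abs_sum_mul_le_sqrt_mul_sqrt Finset.univ (fun p : Fin n × Fin n => A p.1 p.2)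
    (fun p => Bᵀ p.1 p.2)
  simp only [← Finset.univ_product_univ, Finset.sum_product] at h
  rw [frobNorm_eq_sqrt_sum, frobNorm_eq_sqrt_sum, Finset.sum_comm (f := fun i j => B i j ^ 2)]
  simpa only [Matrix.trace, Matrix.diag_apply, Matrix.mul_apply, Matrix.transpose_apply] using h

lemma frobNorm_le_sqrt_mul_specNorm (A : Matrix (Fin n) (Fin n) ℝ) :
    frobNorm A ≤ √n * specNorm A := by
  have hcol (j : Fin n) : ∑ i, A i j ^ 2 ≤ specNorm A ^ 2 := by
    have h := vnorm_mulVec_le A (Pi.single j 1)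
    rw [Matrix.mulVec_single_one, vnorm_single_one, mul_one] at h
    calc ∑ i, A i j ^ 2 = vnorm (Aᵀ j) ^ 2 := (Real.sq_sqrt (by positivity)).symm
      _ ≤ specNorm A ^ 2 := pow_le_pow_left₀ (vnorm_nonneg _) h 2
  rw [frobNorm_eq_sqrt_sum, Finset.sum_comm, ← Real.sqrt_sq (specNorm_nonneg A),
    ← Real.sqrt_mul (Nat.cast_nonneg n)]
  refine Real.sqrt_le_sqrt ((Finset.sum_le_sum fun j _ => hcol j).trans ?_)
  simp

end EuclideanNorms

section EigenvalueLowerBound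

variable {n : ℕ} {lmin : ℝ} {A A' : Matrix (Fin n) (Fin n) ℝ}

lemma posDef_of_posSemidef_sub_smul_one (hl : 0 < lmin) (hA : (A - lmin • 1).PosSemidef) :
    A.PosDef := by
  simpa using Matrix.PosDef.posSemidef_add hA (Matrix.PosDef.one.smul hl)

lemma mul_sq_vnorm_le_dotProduct_mulVec (hA : (A - lmin • 1).PosSemidef) (x : Fin n → ℝ) :
    lmin * vnorm x ^ 2 ≤ x ⬝ᵥ A *ᵥ x := by
  have h := hA.dotProduct_mulVec_nonneg x
  simp only [star_trivial, Matrix.sub_mulVec, Matrix.smul_mulVec, Matrix.one_mulVec,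
    dotProduct_sub, dotProduct_smul, smul_eq_mul] at h
  rw [sq_vnorm]
  linarith

lemma specNorm_inv_le (hl : 0 < lmin) (hA : (A - lmin • 1).PosSemidef) :
    specNorm A⁻¹ ≤ lmin⁻¹ := by
  refine specNorm_le_of_vnorm_mulVec_le _ (inv_nonneg.2 hl.le) fun y => ?_
  set x := A⁻¹ *ᵥ y
  have hAx : A *ᵥ x = y := by
    rw [Matrix.mulVec_mulVec, Matrix.mul_nonsing_inv _
      (posDef_of_posSemidef_sub_smul_one hl hA).det_pos.ne'.isUnit, Matrix.one_mulVec]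
  have hquad : lmin * vnorm x ^ 2 ≤ vnorm x * vnorm y := by
    have h := mul_sq_vnorm_le_dotProduct_mulVec hA x
    rw [hAx] at h
    exact h.trans ((le_abs_self _).trans (abs_dotProduct_le x y))
  rw [inv_mul_eq_div, le_div_iff₀ hl]
  nlinarith [vnorm_nonneg x, vnorm_nonneg y]

lemma frobNorm_inv_le (hl : 0 < lmin) (hA : (A - lmin • 1).PosSemidef) :
    frobNorm A⁻¹ ≤ √n / lmin :=
  (frobNorm_le_sqrt_mul_specNorm _).trans <| by
    rw [div_eq_mul_inv]
    exact mul_le_mul_of_nonneg_left (specNorm_inv_le hl hA) (Real.sqrt_nonneg _)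

lemma specNorm_inv_sub_inv_le (hl : 0 < lmin) (hA : (A - lmin • 1).PosSemidef)
    (hA' : (A' - lmin • 1).PosSemidef) :
    specNorm (A⁻¹ - A'⁻¹) ≤ specNorm (A - A') / lmin ^ 2 := by
  rw [Matrix.inv_sub_inv (iff_of_true (posDef_of_posSemidef_sub_smul_one hl hA).isUnit
    (posDef_of_posSemidef_sub_smul_one hl hA').isUnit)]
  calc specNorm (A⁻¹ * (A' - A) * A'⁻¹) ≤ specNorm A⁻¹ * specNorm (A' - A) * specNorm A'⁻¹ :=
        (specNorm_mul_le _ _).trans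
          (mul_le_mul_of_nonneg_right (specNorm_mul_le _ _) (specNorm_nonneg _))
    _ ≤ lmin⁻¹ * specNorm (A - A') * lmin⁻¹ := by
        rw [specNorm_sub_comm]
        exact mul_le_mul
          (mul_le_mul_of_nonneg_right (specNorm_inv_le hl hA) (specNorm_nonneg _))
          (specNorm_inv_le hl hA') (specNorm_nonneg _)
          (mul_nonneg (inv_nonneg.2 hl.le) (specNorm_nonneg _))
    _ = specNorm (A - A') / lmin ^ 2 := by field_simp

end EigenvalueLowerBound

section Jacobi

variable {ι : Type*} [Fintype ι] [DecidableEq ι]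

lemma sum_det_updateRow_eq_trace_adjugate_mul {R : Type*} [CommRing R] (A D : Matrix ι ι R) :
    ∑ i, (A.updateRow i (D i)).det = (A.adjugate * D).trace := by
  simp only [← Matrix.cramer_transpose_apply, Matrix.cramer_eq_adjugate_mulVec,
    ← Matrix.adjugate_transpose, Matrix.trace, Matrix.diag_apply, Matrix.mul_apply,
    Matrix.mulVec, dotProduct, Matrix.transpose_apply]
  exact Finset.sum_comm

theorem hasDerivAt_det {𝕜 : Type*} [NontriviallyNormedField 𝕜] {M : 𝕜 → Matrix ι ι 𝕜}
    {D : Matrix ι ι 𝕜} {t : 𝕜} (hM : ∀ i j, HasDerivAt (fun s => M s i j) (D i j) t) :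
    HasDerivAt (fun s => (M s).det) ((M t).adjugate * D).trace t := by
  -- `det` is multilinear in the rows, so its derivative replaces one row at a time.
  let detMultilinear : ContinuousMultilinearMap 𝕜 (fun _ : ι => ι → 𝕜) 𝕜 :=
    ⟨(Matrix.detRowAlternating : (ι → 𝕜) [⋀^ι]→ₗ[𝕜] 𝕜).toMultilinearMap,
      continuous_id.matrix_det⟩
  have hrows : HasDerivAt (fun s => (M s : ι → ι → 𝕜)) (D : ι → ι → 𝕜) t :=
    hasDerivAt_pi.2 fun i => hasDerivAt_pi.2 fun j => hM i j
  refine ((detMultilinear.hasFDerivAt (M t)).comp_hasDerivAt t hrows).congr_deriv ?_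
  exact (detMultilinear.linearDeriv_apply (M t) D).trans
    (sum_det_updateRow_eq_trace_adjugate_mul _ _)

theorem hasDerivAt_log_det {M : ℝ → Matrix ι ι ℝ} {D : Matrix ι ι ℝ} {t : ℝ}
    (hM : ∀ i j, HasDerivAt (fun s => M s i j) (D i j) t) (hdet : (M t).det ≠ 0) :
    HasDerivAt (fun s => Real.log (M s).det) ((M t)⁻¹ * D).trace t := by
  refine ((hasDerivAt_det hM).log hdet).congr_deriv ?_
  rw [Matrix.inv_def, Matrix.smul_mul, Matrix.trace_smul, Ring.inverse_eq_inv', smul_eq_mul,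
    div_eq_inv_mul]

end Jacobi

section LogDet

variable {n l : ℕ}

lemma of_fderiv_apply_eq_sum_smul_partialDeriv (C : (Fin l → ℝ) → Matrix (Fin n) (Fin n) ℝ)
    (φ Δ : Fin l → ℝ) :
    Matrix.of (fun i k => fderiv ℝ (fun ψ => C ψ i k) φ Δ) = ∑ j, Δ j • partialDeriv C j φ := by
  ext i k
  conv_lhs => rw [pi_eq_sum_univ' Δ]
  simp [partialDeriv, Matrix.sum_apply]

lemma sum_abs_le_sqrt_card_mul_vnorm (x : Fin l → ℝ) : ∑ j, |x j| ≤ √l * vnorm x := by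
  simpa [vnorm] using Real.sum_mul_le_sqrt_mul_sqrt Finset.univ (fun _ => 1) (fun j => |x j|)

lemma mul_sqrt_nonneg_of_frobNorm_le {P : Fin l → Matrix (Fin n) (Fin n) ℝ} {M : ℝ}
    (hP : ∀ j, frobNorm (P j) ≤ M) : 0 ≤ M * √(n * l) := by
  rcases Nat.eq_zero_or_pos l with rfl | hl
  · simp
  · exact mul_nonneg ((frobNorm_nonneg _).trans (hP ⟨0, hl⟩)) (Real.sqrt_nonneg _)

lemma abs_trace_inv_mul_sum_smul_le {lmin M : ℝ} {A : Matrix (Fin n) (Fin n) ℝ}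
    (hl : 0 < lmin) (hA : (A - lmin • 1).PosSemidef) {P : Fin l → Matrix (Fin n) (Fin n) ℝ}
    (hP : ∀ j, frobNorm (P j) ≤ M) (Δ : Fin l → ℝ) :
    |(A⁻¹ * ∑ j, Δ j • P j).trace| ≤ M * √(n * l) / lmin * vnorm Δ := by
  have hterm (j : Fin l) : |(A⁻¹ * P j).trace| ≤ √n / lmin * M :=
    (abs_trace_mul_le _ _).trans
      (mul_le_mul (frobNorm_inv_le hl hA) (hP j) (frobNorm_nonneg _) (by positivity))
  rcases Nat.eq_zero_or_pos l with rfl | hl0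
  · simp
  have hM0 : 0 ≤ M := (frobNorm_nonneg _).trans (hP ⟨0, hl0⟩)
  rw [Matrix.mul_sum, Matrix.trace_sum]
  calc |∑ j, (A⁻¹ * (Δ j • P j)).trace| ≤ ∑ j, |Δ j| * (√n / lmin * M) := by
        refine (Finset.abs_sum_le_sum_abs _ _).trans (Finset.sum_le_sum fun j _ => ?_)
        rw [Matrix.mul_smul, Matrix.trace_smul, smul_eq_mul, abs_mul]
        exact mul_le_mul_of_nonneg_left (hterm j) (abs_nonneg _)
    _ = (∑ j, |Δ j|) * (√n / lmin * M) := by rw [Finset.sum_mul]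
    _ ≤ √l * vnorm Δ * (√n / lmin * M) := by
        gcongr
        exact sum_abs_le_sqrt_card_mul_vnorm Δ
    _ = M * √(n * l) / lmin * vnorm Δ := by
        rw [Real.sqrt_mul (Nat.cast_nonneg n)]
        ring

lemma abs_log_det_sub_le {U : Set (Fin l → ℝ)} (hUopen : IsOpen U)
    (hUconv : Convex ℝ U) {C : (Fin l → ℝ) → Matrix (Fin n) (Fin n) ℝ}
    (hC : ∀ i k, ContDiffOn ℝ 1 (fun φ => C φ i k) U) {lmin M : ℝ} (hl : 0 < lmin)
    (hpsd : ∀ φ ∈ U, (C φ - lmin • (1 : Matrix (Fin n) (Fin n) ℝ)).PosSemidef)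
    (hM : ∀ φ ∈ U, ∀ j, frobNorm (partialDeriv C j φ) ≤ M)
    {φ φ' : Fin l → ℝ} (hφ : φ ∈ U) (hφ' : φ' ∈ U) :
    |Real.log (C φ).det - Real.log (C φ').det| ≤ M * √(n * l) / lmin * vnorm (φ - φ') := by
  set Δ := φ - φ'
  have hpath (t : ℝ) (ht : t ∈ Set.Icc 0 1) : φ' + t • Δ ∈ U := hUconv.add_smul_sub_mem hφ' hφ ht
  have hderiv (t : ℝ) (ht : t ∈ Set.Icc 0 1) :
      HasDerivAt (fun s : ℝ => Real.log (C (φ' + s • Δ)).det)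
        ((C (φ' + t • Δ))⁻¹ * ∑ j, Δ j • partialDeriv C j (φ' + t • Δ)).trace t := by
    rw [← of_fderiv_apply_eq_sum_smul_partialDeriv]
    refine hasDerivAt_log_det (fun i k => ?_)
      (posDef_of_posSemidef_sub_smul_one hl (hpsd _ (hpath t ht))).det_pos.ne'
    have hdiff : DifferentiableAt ℝ (fun φ => C φ i k) (φ' + t • Δ) :=
      ((hC i k).contDiffAt (hUopen.mem_nhds (hpath t ht))).differentiableAt one_ne_zero
    have hline : HasDerivAt (fun s : ℝ => φ' + s • Δ) Δ t := by
      simpa using ((hasDerivAt_id t).smul_const Δ).const_add φ'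
    exact hdiff.hasFDerivAt.comp_hasDerivAt t hline
  have h := norm_image_sub_le_of_norm_deriv_le_segment_01'
    (fun t ht => (hderiv t ht).hasDerivWithinAt) fun t ht =>
      abs_trace_inv_mul_sum_smul_le hl (hpsd _ (hpath t (Set.Ico_subset_Icc_self ht)))
        (hM _ (hpath t (Set.Ico_subset_Icc_self ht))) Δ
  simpa [Δ] using h

end LogDet

section QuadraticForm

variable {n L : ℕ}

lemma abs_dotProduct_mulVec_sub_le (Q Q' : Matrix (Fin n) (Fin n) ℝ) {r r' : Fin n → ℝ}
    {ρ : ℝ} (hr : vnorm r ≤ ρ) (hr' : vnorm r' ≤ ρ) :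
    |r ⬝ᵥ Q *ᵥ r - r' ⬝ᵥ Q' *ᵥ r'| ≤
      specNorm (Q - Q') * ρ ^ 2 + 2 * specNorm Q' * ρ * vnorm (r - r') := by
  have hρ : 0 ≤ ρ := (vnorm_nonneg r).trans hr
  have hsplit : r ⬝ᵥ Q *ᵥ r - r' ⬝ᵥ Q' *ᵥ r' =
      r ⬝ᵥ (Q - Q') *ᵥ r + ((r - r') ⬝ᵥ Q' *ᵥ r + r' ⬝ᵥ Q' *ᵥ (r - r')) := by
    simp only [Matrix.sub_mulVec, Matrix.mulVec_sub, dotProduct_sub, sub_dotProduct]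
    ring
  have h₁ := abs_dotProduct_mulVec_le (Q - Q') r r
  have h₂ := abs_dotProduct_mulVec_le Q' (r - r') r
  have h₃ := abs_dotProduct_mulVec_le Q' r' (r - r')
  have hQ := specNorm_nonneg (Q - Q')
  have hQ' := specNorm_nonneg Q'
  have hd := vnorm_nonneg (r - r')
  rw [hsplit]
  refine (abs_add_le _ _).trans (add_le_add h₁ ((abs_add_le _ _).trans (add_le_add h₂ h₃)))
    |>.trans ?_
  have := mul_le_mul hr hr (vnorm_nonneg r) hρ
  nlinarith [mul_le_mul_of_nonneg_left hr (mul_nonneg hQ' hd),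
    mul_le_mul_of_nonneg_left hr' (mul_nonneg hQ' hd),
    mul_le_mul_of_nonneg_left this hQ]

lemma vnorm_sub_mulVec_le (Y : Fin n → ℝ) {B : Matrix (Fin n) (Fin L) ℝ} {Bstar R : ℝ}
    (hB : specNorm B ≤ Bstar) {β : Fin L → ℝ} (hβ : vnorm β ≤ R) :
    vnorm (Y - B *ᵥ β) ≤ vnorm Y + Bstar * R :=
  (vnorm_sub_le _ _).trans <| add_le_add le_rfl ((vnorm_mulVec_le B β).trans
    (mul_le_mul hB hβ (vnorm_nonneg β) ((specNorm_nonneg B).trans hB)))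

lemma abs_residual_quadForm_sub_le {lmin Lphi d : ℝ} {A A' : Matrix (Fin n) (Fin n) ℝ}
    (hl : 0 < lmin) (hA : (A - lmin • 1).PosSemidef) (hA' : (A' - lmin • 1).PosSemidef)
    (hAA' : specNorm (A - A') ≤ Lphi * d) (Y : Fin n → ℝ) {B : Matrix (Fin n) (Fin L) ℝ}
    {Bstar R : ℝ} (hB : specNorm B ≤ Bstar) {β β' : Fin L → ℝ} (hβ : vnorm β ≤ R)
    (hβ' : vnorm β' ≤ R) :
    |(Y - B *ᵥ β) ⬝ᵥ A⁻¹ *ᵥ (Y - B *ᵥ β) - (Y - B *ᵥ β') ⬝ᵥ A'⁻¹ *ᵥ (Y - B *ᵥ β')| ≤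
      Lphi / lmin ^ 2 * (vnorm Y ^ 2 + 2 * Bstar * R * vnorm Y + (Bstar * R) ^ 2) * d +
        Bstar / lmin * (2 * vnorm Y + 2 * Bstar * R) * vnorm (β - β') := by
  have hρ : 0 ≤ vnorm Y + Bstar * R :=
    (vnorm_nonneg _).trans (vnorm_sub_mulVec_le Y hB hβ)
  have hdiff : vnorm ((Y - B *ᵥ β) - (Y - B *ᵥ β')) ≤ Bstar * vnorm (β - β') := by
    rw [sub_sub_sub_cancel_left, ← Matrix.mulVec_sub, vnorm_sub_comm]
    exact (vnorm_mulVec_le B _).trans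
      (mul_le_mul_of_nonneg_right hB (vnorm_nonneg _))
  calc _ ≤ specNorm (A⁻¹ - A'⁻¹) * (vnorm Y + Bstar * R) ^ 2 +
        2 * specNorm A'⁻¹ * (vnorm Y + Bstar * R) * vnorm ((Y - B *ᵥ β) - (Y - B *ᵥ β')) :=
        abs_dotProduct_mulVec_sub_le _ _ (vnorm_sub_mulVec_le Y hB hβ)
          (vnorm_sub_mulVec_le Y hB hβ')
    _ ≤ Lphi * d / lmin ^ 2 * (vnorm Y + Bstar * R) ^ 2 +
        2 * lmin⁻¹ * (vnorm Y + Bstar * R) * (Bstar * vnorm (β - β')) := by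
        gcongr
        · exact (specNorm_inv_sub_inv_le hl hA hA').trans (by gcongr)
        · exact vnorm_nonneg _
        · exact specNorm_inv_le hl hA'
    _ = _ := by ring

end QuadraticForm

lemma mul_add_mul_le_sqrt_two_mul_max {a b x y : ℝ} (hb : 0 ≤ b) (hx : 0 ≤ x) (hy : 0 ≤ y) :
    a * x + b * y ≤ √2 * max a b * √(y ^ 2 + x ^ 2) := by
  have hxy : x + y ≤ √2 * √(y ^ 2 + x ^ 2) := by
    rw [← Real.sqrt_mul zero_le_two]
    exact Real.le_sqrt_of_sq_le (by nlinarith [sq_nonneg (x - y)])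
  calc a * x + b * y ≤ max a b * (x + y) := by
        nlinarith [le_max_left a b, le_max_right a b]
    _ ≤ max a b * (√2 * √(y ^ 2 + x ^ 2)) :=
        mul_le_mul_of_nonneg_left hxy (hb.trans (le_max_right a b))
    _ = √2 * max a b * √(y ^ 2 + x ^ 2) := by ring

lemma logLik_sub_logLik {n L l : ℕ} (Y : Fin n → ℝ) (B : Matrix (Fin n) (Fin L) ℝ)
    (C : (Fin l → ℝ) → Matrix (Fin n) (Fin n) ℝ) (β β' : Fin L → ℝ) (φ φ' : Fin l → ℝ) :
    logLik Y B C β φ - logLik Y B C β' φ' = -(1 / 2) *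
      ((Real.log (C φ).det - Real.log (C φ').det) +
        ((Y - B *ᵥ β) ⬝ᵥ (C φ)⁻¹ *ᵥ (Y - B *ᵥ β) - (Y - B *ᵥ β') ⬝ᵥ (C φ')⁻¹ *ᵥ (Y - B *ᵥ β'))) := by
  unfold logLik
  ring

theorem logLik_uniform_lipschitz_general {n L l : ℕ} (U : Set (Fin l → ℝ))
    (hUopen : IsOpen U) (hUconv : Convex ℝ U)
    (C : (Fin l → ℝ) → Matrix (Fin n) (Fin n) ℝ)
    (hC : ∀ i k, ContDiffOn ℝ 1 (fun φ => C φ i k) U)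
    (lmin M Lphi : ℝ) (hl : 0 < lmin)
    (hpsd : ∀ φ ∈ U, (C φ - lmin • (1 : Matrix (Fin n) (Fin n) ℝ)).PosSemidef)
    (hM : ∀ φ ∈ U, ∀ j, frobNorm (partialDeriv C j φ) ≤ M)
    (hLip : ∀ φ ∈ U, ∀ φ' ∈ U, specNorm (C φ - C φ') ≤ Lphi * vnorm (φ - φ'))
    (Y : Fin n → ℝ) (B : Matrix (Fin n) (Fin L) ℝ) (Bstar R : ℝ)
    (hB : specNorm B ≤ Bstar)
    (φ φ' : Fin l → ℝ) (hφ : φ ∈ U) (hφ' : φ' ∈ U)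
    (β β' : Fin L → ℝ) (hβ : vnorm β ≤ R) (hβ' : vnorm β' ≤ R) :
    |logLik Y B C β φ - logLik Y B C β' φ'| ≤
      ((1 / 2) * (M * Real.sqrt ((n : ℝ) * l) / lmin) +
          (1 / 2) * stochLipCoeff Y Bstar R lmin Lphi) *
        Real.sqrt (vnorm (β - β') ^ 2 + vnorm (φ - φ') ^ 2) := by
  set s := √(vnorm (β - β') ^ 2 + vnorm (φ - φ') ^ 2)
  have hlogdet := abs_log_det_sub_le hUopen hUconv hC hl hpsd hM hφ hφ'
  have hquad := abs_residual_quadForm_sub_le hl (hpsd φ hφ) (hpsd φ' hφ') (hLip φ hφ φ' hφ') Y hB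
    hβ hβ'
  have hR : 0 ≤ R := (vnorm_nonneg β).trans hβ
  have hBstar : 0 ≤ Bstar := (specNorm_nonneg B).trans hB
  have hmix := mul_add_mul_le_sqrt_two_mul_max
    (a := Lphi / lmin ^ 2 * (vnorm Y ^ 2 + 2 * Bstar * R * vnorm Y + (Bstar * R) ^ 2))
    (b := Bstar / lmin * (2 * vnorm Y + 2 * Bstar * R))
    (by have := vnorm_nonneg Y; positivity) (vnorm_nonneg (φ - φ')) (vnorm_nonneg (β - β'))
  have hK : 0 ≤ M * √(n * l) / lmin :=
    div_nonneg (mul_sqrt_nonneg_of_frobNorm_le (hM φ hφ)) hl.le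
  have hφs : vnorm (φ - φ') ≤ s := Real.le_sqrt_of_sq_le (le_add_of_nonneg_left (sq_nonneg _))
  rw [logLik_sub_logLik, abs_mul, abs_neg, abs_of_pos one_half_pos]
  calc 1 / 2 * |_ + _| ≤
        1 / 2 * (M * √(n * l) / lmin * s + stochLipCoeff Y Bstar R lmin Lphi * s) := by
        gcongr
        exact (abs_add_le _ _).trans (add_le_add (hlogdet.trans (by gcongr)) (hquad.trans hmix))
    _ = _ := by ring

/-- **Uniform Lipschitz continuity of the Gaussian-process log-likelihood in the
joint parameter `(β, φ)`.**  If `C : U → Mₙ(ℝ)` is continuously differentiable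
(entrywise) on an open convex `U ⊆ ℝˡ`, with `C(φ)` symmetric with eigenvalues
bounded below by `λ_min > 0` and `‖∂C/∂φⱼ(φ)‖_F ≤ M` on `U`, and
`‖C(φ) − C(φ')‖₂ ≤ L_φ‖φ − φ'‖₂` on `U`, then for `‖B‖₂ ≤ B*` and all
`φ, φ' ∈ U`, `‖β‖₂ ≤ R`, `‖β'‖₂ ≤ R`:
`|ℓ(β,φ) − ℓ(β',φ')| ≤ (½ M √(nl)/λ_min + ½ 𝓛(Y)) · ‖(β,φ) − (β',φ')‖₂`. -/
theorem logLik_uniform_lipschitz {n L l : ℕ} (U : Set (Fin l → ℝ))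
    (hUopen : IsOpen U) (hUconv : Convex ℝ U)
    (C : (Fin l → ℝ) → Matrix (Fin n) (Fin n) ℝ)
    (hC : ∀ i k, ContDiffOn ℝ 1 (fun φ => C φ i k) U)
    (lmin M Lphi : ℝ) (hl : 0 < lmin)
    (hsymm : ∀ φ ∈ U, (C φ).IsSymm)
    (hpsd : ∀ φ ∈ U, (C φ - lmin • (1 : Matrix (Fin n) (Fin n) ℝ)).PosSemidef)
    (hM : ∀ φ ∈ U, ∀ j, frobNorm (partialDeriv C j φ) ≤ M)
    (hLip : ∀ φ ∈ U, ∀ φ' ∈ U, specNorm (C φ - C φ') ≤ Lphi * vnorm (φ - φ'))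
    (Y : Fin n → ℝ) (B : Matrix (Fin n) (Fin L) ℝ) (Bstar R : ℝ)
    (hB : specNorm B ≤ Bstar) (hR : 0 < R)
    (φ φ' : Fin l → ℝ) (hφ : φ ∈ U) (hφ' : φ' ∈ U)
    (β β' : Fin L → ℝ) (hβ : vnorm β ≤ R) (hβ' : vnorm β' ≤ R) :
    |logLik Y B C β φ - logLik Y B C β' φ'| ≤
      ((1 / 2) * (M * Real.sqrt ((n : ℝ) * l) / lmin) +
          (1 / 2) * stochLipCoeff Y Bstar R lmin Lphi) *
        Real.sqrt (vnorm (β - β') ^ 2 + vnorm (φ - φ') ^ 2) :=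
  logLik_uniform_lipschitz_general U hUopen hUconv C hC lmin M Lphi hl hpsd hM hLip Y B Bstar R hB φ
    φ' hφ hφ' β β' hβ hβ'
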